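/- arXiv:1601.06855 — 2 statements merged into one kernel-verified Lean document; each statement's English description precedes it below -/
import Mathlib

section
/- Let P₁ and P₂ be orthogonal projections on finite-dimensional Hilbert spaces H₁ and H₂ respectively. Suppose X₁, Y₁ are Hermitian operators on H₁ with P₁(X₁ - Y₁)P₁ ≤ 0 and P₁ Y₁ P₁ ≥ 0, and X₂, Y₂ are Hermitian operators on H₂ with P₂(X₂ - Y₂)P₂ ≤ 0 and P₂ X₂ P₂ ≥ 0. Then (P₁ ⊗ P₂)(X₁ ⊗ X₂ - Y₁ ⊗ Y₂)(P₁ ⊗ P₂) ≤ 0. -/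
/-!
The difference of Kronecker products telescopes,
`X₁ ⊗ X₂ - Y₁ ⊗ Y₂ = (X₁ - Y₁) ⊗ X₂ + Y₁ ⊗ (X₂ - Y₂)`, and compressing by `P₁ ⊗ P₂` compresses
each factor separately. Hence minus the compressed difference is
`(-P₁(X₁ - Y₁)P₁) ⊗ P₂X₂P₂ + P₁Y₁P₁ ⊗ (-P₂(X₂ - Y₂)P₂)`, a sum of Kronecker products of
positive semidefinite matrices, which is positive semidefinite.
-/

open Matrix Kronecker ComplexOrder

namespace Matrix

variable {α l m n p : Type*}

theorem neg_kronecker [Mul α] [HasDistribNeg α] (A : Matrix l m α) (B : Matrix n p α) :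
    (-A) ⊗ₖ B = -(A ⊗ₖ B) :=
  ext fun _ _ => neg_mul _ _

theorem kronecker_neg [Mul α] [HasDistribNeg α] (A : Matrix l m α) (B : Matrix n p α) :
    A ⊗ₖ (-B) = -(A ⊗ₖ B) :=
  ext fun _ _ => mul_neg _ _

theorem kronecker_sub_kronecker [NonUnitalNonAssocRing α] (A C : Matrix l m α)
    (B D : Matrix n p α) : A ⊗ₖ B - C ⊗ₖ D = (A - C) ⊗ₖ B + C ⊗ₖ (B - D) :=
  ext fun _ _ => by simp only [sub_apply, add_apply, kroneckerMap_apply]; noncomm_ring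

end Matrix

theorem kron_sandwich_nonpos_general {n₁ n₂ : Type*} [Fintype n₁] [Fintype n₂]
    (P₁ X₁ Y₁ : Matrix n₁ n₁ ℂ) (P₂ X₂ Y₂ : Matrix n₂ n₂ ℂ)
    (h₁ : (-(P₁ * (X₁ - Y₁) * P₁)).PosSemidef)
    (h₁' : (P₁ * Y₁ * P₁).PosSemidef)
    (h₂ : (-(P₂ * (X₂ - Y₂) * P₂)).PosSemidef)
    (h₂' : (P₂ * X₂ * P₂).PosSemidef) :
    (-((P₁ ⊗ₖ P₂) * (X₁ ⊗ₖ X₂ - Y₁ ⊗ₖ Y₂) * (P₁ ⊗ₖ P₂))).PosSemidef := by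
  have split : -((P₁ ⊗ₖ P₂) * (X₁ ⊗ₖ X₂ - Y₁ ⊗ₖ Y₂) * (P₁ ⊗ₖ P₂)) =
      (-(P₁ * (X₁ - Y₁) * P₁)) ⊗ₖ (P₂ * X₂ * P₂) +
        (P₁ * Y₁ * P₁) ⊗ₖ (-(P₂ * (X₂ - Y₂) * P₂)) := by
    rw [kronecker_sub_kronecker, mul_add, add_mul, neg_add, neg_kronecker, kronecker_neg,
      mul_kronecker_mul, mul_kronecker_mul, mul_kronecker_mul, mul_kronecker_mul]
  rw [split]
  exact (h₁.kronecker h₂').add (h₁'.kronecker h₂)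

/-- If `P₁, P₂` are orthogonal projections, `X₁, Y₁` Hermitian with
`P₁ (X₁ - Y₁) P₁ ≤ 0` and `P₁ Y₁ P₁ ≥ 0`, and `X₂, Y₂` Hermitian with
`P₂ (X₂ - Y₂) P₂ ≤ 0` and `P₂ X₂ P₂ ≥ 0`, then
`(P₁ ⊗ P₂) (X₁ ⊗ X₂ - Y₁ ⊗ Y₂) (P₁ ⊗ P₂) ≤ 0` in the Loewner order. -/
theorem kron_sandwich_nonpos {n₁ n₂ : Type*} [Fintype n₁] [Fintype n₂]
    [DecidableEq n₁] [DecidableEq n₂]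
    (P₁ X₁ Y₁ : Matrix n₁ n₁ ℂ) (P₂ X₂ Y₂ : Matrix n₂ n₂ ℂ)
    (hP₁herm : P₁.IsHermitian) (hP₁proj : P₁ * P₁ = P₁)
    (hP₂herm : P₂.IsHermitian) (hP₂proj : P₂ * P₂ = P₂)
    (hX₁ : X₁.IsHermitian) (hY₁ : Y₁.IsHermitian)
    (hX₂ : X₂.IsHermitian) (hY₂ : Y₂.IsHermitian)
    (h₁ : (-(P₁ * (X₁ - Y₁) * P₁)).PosSemidef)
    (h₁' : (P₁ * Y₁ * P₁).PosSemidef)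
    (h₂ : (-(P₂ * (X₂ - Y₂) * P₂)).PosSemidef)
    (h₂' : (P₂ * X₂ * P₂).PosSemidef) :
    (-((P₁ ⊗ₖ P₂) * (X₁ ⊗ₖ X₂ - Y₁ ⊗ₖ Y₂) * (P₁ ⊗ₖ P₂))).PosSemidef :=
  kron_sandwich_nonpos_general P₁ X₁ Y₁ P₂ X₂ Y₂ h₁ h₁' h₂ h₂'
end

section
/- If (S, U) is feasible for projection P (i.e., U ≥ 0, Tr_A U = I_B, P(S ⊗ I_B − U)P ≤ 0) and moreover P(S ⊗ I_B)P ≥ 0, then for every n ≥ 1 the pair (S^{⊗n}, U^{⊗n}) is feasible for P^{⊗n} and also satisfies P^{⊗n}(S^{⊗n} ⊗ I_B^{⊗n})P^{⊗n} ≥ 0. -/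
open Matrix Kronecker ComplexOrder

/-- Partial trace over the first (`A`) factor. -/
noncomputable def ptraceA {A B : Type*} [Fintype A] (M : Matrix (A × B) (A × B) ℂ) :
    Matrix B B ℂ :=
  Matrix.of fun b b' => ∑ a : A, M (a, b) (a, b')

/-- The `n`-fold tensor (Kronecker) power of a matrix. -/
noncomputable def tensorPow {I : Type*} (M : Matrix I I ℂ) (n : ℕ) :
    Matrix (Fin n → I) (Fin n → I) ℂ :=
  Matrix.of fun f g => ∏ k : Fin n, M (f k) (g k)

/-- Feasibility for the dual SDP of the simulation cost. -/
def Feasible {A B : Type*} [Fintype A] [Fintype B] [DecidableEq B]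
    (P : Matrix (A × B) (A × B) ℂ) (S : Matrix A A ℂ) (U : Matrix (A × B) (A × B) ℂ) :
    Prop :=
  S.IsHermitian ∧ U.PosSemidef ∧ ptraceA U = 1 ∧
    (-(P * (S ⊗ₖ (1 : Matrix B B ℂ) - U) * P)).PosSemidef

/-- The natural identification `(A × B)^{⊗n} ≃ A^{⊗n} × B^{⊗n}`. -/
def powEquiv (A B : Type*) (n : ℕ) : (Fin n → A × B) ≃ (Fin n → A) × (Fin n → B) :=
  Equiv.arrowProdEquivProdArrow (Fin n) (fun _ => A) (fun _ => B)

/-!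
Tensor powers are multiplicative and, after regrouping the factors, send `S ⊗ I_B` to
`S^{⊗n} ⊗ I_B^{⊗n}`; hence every sandwich `P^{⊗n} X^{⊗n} P^{⊗n}` is `(P X P)^{⊗n}`. The
hypotheses say `0 ≤ P (S ⊗ I_B) P ≤ P U P` in the Loewner order, and `0 ≤ X ≤ Y` implies
`X^{⊗n} ≤ Y^{⊗n}` by induction on `n`, since
`Y ⊗ Y' - X ⊗ X' = (Y - X) ⊗ Y' + X ⊗ (Y' - X')` is a sum of positive semidefinite matrices.
-/

open scoped MatrixOrder

lemma kronecker_le_kronecker {𝕜 m n : Type*} [RCLike 𝕜] [Finite m] [Finite n]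
    {A B : Matrix m m 𝕜} {C D : Matrix n n 𝕜}
    (hA : 0 ≤ A) (hAB : A ≤ B) (hC : 0 ≤ C) (hCD : C ≤ D) : A ⊗ₖ C ≤ B ⊗ₖ D := by
  have hsplit : B ⊗ₖ D = (B - A) ⊗ₖ D + A ⊗ₖ (D - C) + A ⊗ₖ C := by
    rw [add_assoc, ← kronecker_add, sub_add_cancel, ← add_kronecker, sub_add_cancel]
  rw [le_iff, sub_eq_of_eq_add hsplit]
  exact ((le_iff.mp hAB).kronecker (hC.trans hCD).posSemidef).add
    (hA.posSemidef.kronecker (le_iff.mp hCD))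

lemma reindex_le_reindex {𝕜 m n : Type*} [RCLike 𝕜] (e : m ≃ n) {A B : Matrix m m 𝕜}
    (h : A ≤ B) : reindex e e A ≤ reindex e e B :=
  (le_iff.mp h).submatrix _

lemma reindex_mul_reindex {R m n : Type*} [Fintype m] [Fintype n] [NonUnitalNonAssocSemiring R]
    (e : m ≃ n) (M N : Matrix m m R) :
    reindex e e M * reindex e e N = reindex e e (M * N) := by
  simp [reindex_apply, submatrix_mul_equiv]

lemma posSemidef_neg_mul_sub_mul_iff {𝕜 n : Type*} [RCLike 𝕜] [Fintype n]
    (P X Y : Matrix n n 𝕜) : (-(P * (X - Y) * P)).PosSemidef ↔ P * X * P ≤ P * Y * P := by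
  rw [le_iff, mul_sub, sub_mul, neg_sub]

section TensorPow

variable {I : Type*}

lemma tensorPow_zero [DecidableEq I] (M : Matrix I I ℂ) : tensorPow M 0 = 1 := by
  ext f g
  obtain rfl := Subsingleton.elim f g
  simp [tensorPow]

lemma tensorPow_succ (M : Matrix I I ℂ) (n : ℕ) :
    tensorPow M (n + 1) =
      reindex (Fin.consEquiv fun _ => I) (Fin.consEquiv fun _ => I) (M ⊗ₖ tensorPow M n) := by
  ext f g
  simp [tensorPow, Fin.prod_univ_succ, Fin.tail]

lemma tensorPow_one [DecidableEq I] (n : ℕ) : tensorPow (1 : Matrix I I ℂ) n = 1 := by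
  ext f g
  simp [tensorPow, one_apply, Finset.prod_boole, funext_iff]

lemma tensorPow_mul [Fintype I] (M N : Matrix I I ℂ) (n : ℕ) :
    tensorPow (M * N) n = tensorPow M n * tensorPow N n := by
  ext f g
  simp only [tensorPow, of_apply, mul_apply, Finset.prod_univ_sum, Fintype.piFinset_univ,
    Finset.prod_mul_distrib]

lemma conjTranspose_tensorPow (M : Matrix I I ℂ) (n : ℕ) :
    (tensorPow M n)ᴴ = tensorPow Mᴴ n := by
  ext f g
  simp [tensorPow, star_prod]

lemma Matrix.IsHermitian.tensorPow {M : Matrix I I ℂ} (hM : M.IsHermitian) (n : ℕ) :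
    (tensorPow M n).IsHermitian := by
  rw [IsHermitian, conjTranspose_tensorPow, hM.eq]

variable [Fintype I]

lemma Matrix.PosSemidef.tensorPow {M : Matrix I I ℂ} (hM : M.PosSemidef) (n : ℕ) :
    (tensorPow M n).PosSemidef := by
  classical
  induction n with
  | zero => exact tensorPow_zero M ▸ PosSemidef.one
  | succ n ih => exact tensorPow_succ M n ▸ (hM.kronecker ih).submatrix _

lemma tensorPow_le_tensorPow {X Y : Matrix I I ℂ} (hX : 0 ≤ X) (hXY : X ≤ Y) (n : ℕ) :
    tensorPow X n ≤ tensorPow Y n := by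
  classical
  induction n with
  | zero => rw [tensorPow_zero, tensorPow_zero]
  | succ n ih =>
    rw [tensorPow_succ, tensorPow_succ]
    exact reindex_le_reindex _ <|
      kronecker_le_kronecker hX hXY (hX.posSemidef.tensorPow n).nonneg ih

end TensorPow

section Bipartite

variable {A B : Type*}

lemma reindex_tensorPow_kronecker (M : Matrix A A ℂ) (N : Matrix B B ℂ) (n : ℕ) :
    reindex (powEquiv A B n) (powEquiv A B n) (tensorPow (M ⊗ₖ N) n) =
      tensorPow M n ⊗ₖ tensorPow N n := by
  ext ⟨a, b⟩ ⟨a', b'⟩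
  simp [tensorPow, powEquiv, Equiv.arrowProdEquivProdArrow, Finset.prod_mul_distrib]

lemma ptraceA_reindex_tensorPow [Fintype A] (U : Matrix (A × B) (A × B) ℂ) (n : ℕ) :
    ptraceA (reindex (powEquiv A B n) (powEquiv A B n) (tensorPow U n)) =
      tensorPow (ptraceA U) n := by
  ext b b'
  simp only [ptraceA, tensorPow, of_apply, reindex_apply, submatrix_apply, powEquiv,
    Equiv.arrowProdEquivProdArrow, Equiv.coe_fn_symm_mk, Finset.prod_univ_sum,
    Fintype.piFinset_univ]

end Bipartite

theorem tensorPow_feasible_general {A B : Type*} [Fintype A] [Fintype B]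
    [DecidableEq B]
    (P U : Matrix (A × B) (A × B) ℂ) (S : Matrix A A ℂ)
    (hfeas : Feasible P S U)
    (hpos : (P * (S ⊗ₖ (1 : Matrix B B ℂ)) * P).PosSemidef) :
    ∀ n : ℕ, 1 ≤ n →
      Feasible (Matrix.reindex (powEquiv A B n) (powEquiv A B n) (tensorPow P n))
        (tensorPow S n)
        (Matrix.reindex (powEquiv A B n) (powEquiv A B n) (tensorPow U n)) ∧
      ((Matrix.reindex (powEquiv A B n) (powEquiv A B n) (tensorPow P n)) *
          (tensorPow S n ⊗ₖ (1 : Matrix (Fin n → B) (Fin n → B) ℂ)) *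
          (Matrix.reindex (powEquiv A B n) (powEquiv A B n) (tensorPow P n))).PosSemidef := by
  obtain ⟨hS, hU, htr, hSU⟩ := hfeas
  rw [posSemidef_neg_mul_sub_mul_iff] at hSU
  intro n _
  set e := powEquiv A B n
  have hsandwich (M : Matrix (A × B) (A × B) ℂ) :
      reindex e e (tensorPow (P * M * P) n) =
        reindex e e (tensorPow P n) * reindex e e (tensorPow M n) *
          reindex e e (tensorPow P n) := by
    rw [tensorPow_mul, tensorPow_mul, reindex_mul_reindex, reindex_mul_reindex]
  have hSI : reindex e e (tensorPow (S ⊗ₖ 1) n) = tensorPow S n ⊗ₖ 1 := by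
    rw [reindex_tensorPow_kronecker, tensorPow_one]
  refine ⟨⟨hS.tensorPow n, (hU.tensorPow n).submatrix _, ?_, ?_⟩, ?_⟩
  · rw [ptraceA_reindex_tensorPow, htr, tensorPow_one]
  · rw [posSemidef_neg_mul_sub_mul_iff, ← hSI, ← hsandwich, ← hsandwich]
    exact reindex_le_reindex e (tensorPow_le_tensorPow hpos.nonneg hSU n)
  · rw [← hSI, ← hsandwich]
    exact (hpos.tensorPow n).submatrix _

/-- If `(S, U)` is feasible for `P` and moreover `P (S ⊗ I_B) P ≥ 0`, then for
every `n ≥ 1` the pair `(S^{⊗n}, U^{⊗n})` is feasible for `P^{⊗n}` and also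
satisfies `P^{⊗n} (S^{⊗n} ⊗ I_B^{⊗n}) P^{⊗n} ≥ 0`. -/
theorem tensorPow_feasible {A B : Type*} [Fintype A] [Fintype B]
    [DecidableEq A] [DecidableEq B]
    (P U : Matrix (A × B) (A × B) ℂ) (S : Matrix A A ℂ)
    (hPherm : P.IsHermitian) (hPproj : P * P = P)
    (hfeas : Feasible P S U)
    (hpos : (P * (S ⊗ₖ (1 : Matrix B B ℂ)) * P).PosSemidef) :
    ∀ n : ℕ, 1 ≤ n →
      Feasible (Matrix.reindex (powEquiv A B n) (powEquiv A B n) (tensorPow P n))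
        (tensorPow S n)
        (Matrix.reindex (powEquiv A B n) (powEquiv A B n) (tensorPow U n)) ∧
      ((Matrix.reindex (powEquiv A B n) (powEquiv A B n) (tensorPow P n)) *
          (tensorPow S n ⊗ₖ (1 : Matrix (Fin n → B) (Fin n → B) ℂ)) *
          (Matrix.reindex (powEquiv A B n) (powEquiv A B n) (tensorPow P n))).PosSemidef :=
  tensorPow_feasible_general P U S hfeas hpos
end
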